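/- For every graph automorphism A of the model graph G there is a unique graph automorphism a of the Farey graph 𝔽 such that A maps the Farey vertex x to the Farey vertex a(x) for all x, and the resulting restriction map Aut(G) → Aut(𝔽) is a group isomorphism. -/

import Mathlib

/-- Adjacency relation of the Farey graph on `Option ℚ`: `some x` and `some y` are
adjacent iff `|x.num * y.den - y.num * x.den| = 1`, and `none` (representing `∞`)
is adjacent to `some x` iff `x.den = 1`. -/
def fareyAdj : Option ℚ → Option ℚ → Prop
  | some x, some y => |x.num * (y.den : ℤ) - y.num * (x.den : ℤ)| = 1
  | some x, none => x.den = 1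
  | none, some x => x.den = 1
  | none, none => False

/-- The Farey graph `𝔽` on the vertex set `Option ℚ`. -/
def fareyGraph : SimpleGraph (Option ℚ) where
  Adj := fareyAdj
  symm := ⟨by
    rintro (_ | x) (_ | y) h
    · exact h.elim
    · exact h
    · exact h
    · show |y.num * (x.den : ℤ) - x.num * (y.den : ℤ)| = 1
      rw [abs_sub_comm]
      exact h⟩
  loopless := ⟨by
    rintro (_ | x) h
    · exact h.elim
    · have : |x.num * (x.den : ℤ) - x.num * (x.den : ℤ)| = 1 := h
      simp at this⟩

/-- A triangle of the Farey graph: a 3-element clique. -/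
def FareyTriangle : Type := {s : Finset (Option ℚ) // fareyGraph.IsNClique 3 s}

/-- The Farey dual graph `𝔽*`: vertices are the triangles of the Farey graph, two
triangles being adjacent iff they are distinct and share exactly two vertices. -/
def fareyDual : SimpleGraph FareyTriangle where
  Adj T T' := T ≠ T' ∧ (T.1 ∩ T'.1).card = 2
  symm := ⟨by
    rintro T T' ⟨h1, h2⟩
    exact ⟨h1.symm, by rwa [Finset.inter_comm]⟩⟩
  loopless := ⟨fun T h => h.1 rfl⟩

/-- Vertices of the model graph: Farey vertices `.inl x`, dual vertices
`.inr (.inl x)` (written `x̃`), and triangle-vertices `.inr (.inr T)`. -/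
abbrev ModelVertex : Type := Option ℚ ⊕ (Option ℚ ⊕ FareyTriangle)

/-- Adjacency relation of the model graph `G`. -/
def modelAdj : ModelVertex → ModelVertex → Prop
  | .inl x, .inl y => fareyGraph.Adj x y
  | .inl x, .inr (.inl y) => x = y
  | .inr (.inl x), .inl y => x = y
  | .inr (.inl x), .inr (.inr T) => x ∈ T.1
  | .inr (.inr T), .inr (.inl x) => x ∈ T.1
  | .inr (.inr T), .inr (.inr T') => T ≠ T' ∧ (T.1 ∩ T'.1).card = 2
  | _, _ => False

/-- The model graph `G` of the pants graph of `N₃`: on `V(𝔽) ⊔ V(𝔽) ⊔ T(𝔽)`, with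
edges `x—y` for `x, y` adjacent in `𝔽`, `x̃—x`, `x̃—T` whenever `x ∈ T`, and `T—T'`
whenever `T ≠ T'` and `|T ∩ T'| = 2`. -/
def modelGraph : SimpleGraph ModelVertex where
  Adj := modelAdj
  symm := ⟨by
    rintro (x | x | T) (y | y | T') h
    · exact fareyGraph.symm.symm _ _ h
    · exact h.symm
    · exact h.elim
    · exact h.symm
    · exact h.elim
    · exact h
    · exact h.elim
    · exact h
    · exact ⟨h.1.symm, by
        have := h.2
        rwa [Finset.inter_comm]⟩⟩
  loopless := ⟨by
    rintro (x | x | T) h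
    · exact fareyGraph.loopless.irrefl x h
    · exact h.elim
    · exact h.1 rfl⟩

/-!
Vertex degrees tell the three kinds of vertices of `G` apart. A triangle vertex `T` has finite
degree, because an edge of `𝔽` has only finitely many common neighbours (by Cramer's rule in
homogeneous coordinates). The vertices `x` and `x̃` have infinite degree, because every Farey
vertex has infinitely many neighbours and hence lies in infinitely many triangles. Of these two,
only `x̃` is adjacent to a vertex of finite degree. So every automorphism `A` of `G` preserves
the Farey vertices and restricts to an automorphism `a` of `𝔽`, and `a` determines `A`:
`A x̃` is the only non-Farey neighbour of `a x`, and `A T` is the triangle whose dual vertices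
are the `A x̃` with `x ∈ T`. Conversely, `a` extends to `G` by acting on all three parts.
-/

open Function

namespace SimpleGraph

variable {α β : Type*} {G : SimpleGraph α} {H : SimpleGraph β}

lemma Iso.neighborSet_finite_iff (e : G ≃g H) (v : α) :
    (H.neighborSet (e v)).Finite ↔ (G.neighborSet v).Finite := by
  simpa only [← Set.finite_coe_iff] using (e.mapNeighborSet v).finite_iff.symm

lemma Iso.isNClique_map_iff (e : G ≃g H) {n : ℕ} {s : Finset α} :
    H.IsNClique n (s.map e.toEquiv.toEmbedding) ↔ G.IsNClique n s := by
  rw [isNClique_iff, isNClique_iff, isClique_iff, isClique_iff, Finset.coe_map, Finset.card_map,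
    Equiv.coe_toEmbedding, RelIso.coe_fn_toEquiv, e.injective.injOn.pairwise_image]
  have hadj : (H.Adj on e) = G.Adj := by ext; exact e.map_adj_iff
  rw [hadj]

lemma setOf_isClique_card_inter_eq_two_finite [DecidableEq α]
    (hG : ∀ u v, G.Adj u v → (G.commonNeighbors u v).Finite) (s : Finset α) :
    {t : Finset α | G.IsClique (t : Set α) ∧ (s ∩ t).card = 2}.Finite := by
  set U : Set α := ↑s ∪ ⋃ a ∈ s, ⋃ b ∈ s, ⋃ (_ : G.Adj a b), G.commonNeighbors a b
  have hU : U.Finite := s.finite_toSet.union <| s.finite_toSet.biUnion fun a _ =>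
    s.finite_toSet.biUnion fun b _ => Set.finite_iUnion fun hab => hG a b hab
  refine (hU.finite_subsets.preimage Finset.coe_injective.injOn).subset ?_
  rintro t ⟨ht, hst⟩ y hy
  obtain ⟨a, b, hab, hst⟩ := Finset.card_eq_two.mp hst
  have ha : a ∈ s ∩ t := by simp [hst]
  have hb : b ∈ s ∩ t := by simp [hst]
  rw [Finset.mem_inter] at ha hb
  by_cases hys : y ∈ s
  · exact Or.inl hys
  · refine Or.inr (Set.mem_biUnion ha.1 (Set.mem_biUnion hb.1 (Set.mem_iUnion.mpr
      ⟨ht ha.2 hb.2 hab, ht ha.2 hy ?_, ht hb.2 hy ?_⟩)))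
    · rintro rfl; exact hys ha.1
    · rintro rfl; exact hys hb.1

end SimpleGraph

lemma Int.isCoprime_of_abs_sub_mul_eq_one {a b p q : ℤ} (h : |p * b - a * q| = 1) :
    IsCoprime a b := by
  have hsq : (p * b - a * q) * (p * b - a * q) = 1 := by rw [← abs_mul_abs_self, h, one_mul]
  exact ⟨-(q * (p * b - a * q)), p * (p * b - a * q), by linear_combination hsq⟩

namespace Farey

/-- Homogeneous coordinates `(num u, den u)` of a Farey vertex: `p / q ↦ (p, q)` in lowest terms
with `q > 0`, and `∞ ↦ (1, 0)`. -/
def num : Option ℚ → ℤ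
  | none => 1
  | some x => x.num

def den : Option ℚ → ℤ
  | none => 0
  | some x => x.den

def det (u v : Option ℚ) : ℤ := num u * den v - num v * den u

lemma den_nonneg : ∀ u, 0 ≤ den u
  | none => le_rfl
  | some x => Int.natCast_nonneg x.den

lemma adj_iff_abs_det_eq_one : ∀ u v, fareyGraph.Adj u v ↔ |det u v| = 1
  | none, none => by simp [fareyGraph, det, num, den]
  | none, some y => by simp [fareyGraph, fareyAdj, det, num, den]
  | some x, none => by simp [fareyGraph, fareyAdj, det, num, den]
  | some x, some y => Iff.rfl

lemma num_den_injective : Injective fun u => (num u, den u)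
  | none, none, _ => rfl
  | none, some y, h => absurd (congrArg Prod.snd h).symm (by simp [den])
  | some x, none, h => absurd (congrArg Prod.snd h) (by simp [den])
  | some x, some y, h => by
    simp only [num, den, Prod.mk.injEq, Nat.cast_inj] at h
    exact congrArg some (Rat.ext h.1 h.2)

lemma isCoprime_num_den : ∀ u, IsCoprime (num u) (den u)
  | none => isCoprime_one_left
  | some x => Int.isCoprime_iff_gcd_eq_one.mpr x.reduced

lemma det_mul_num (u v z : Option ℚ) : det u v * num z = det z v * num u + det u z * num v := by
  unfold det; ring

lemma det_mul_den (u v z : Option ℚ) : det u v * den z = det z v * den u + det u z * den v := by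
  unfold det; ring

lemma num_some_div {a b : ℤ} (hb : 0 < b) (h : IsCoprime a b) : num (some (a / b : ℚ)) = a :=
  Rat.num_div_eq_of_coprime hb (Int.isCoprime_iff_gcd_eq_one.mp h)

lemma den_some_div {a b : ℤ} (hb : 0 < b) (h : IsCoprime a b) : den (some (a / b : ℚ)) = b :=
  Rat.den_div_eq_of_coprime hb (Int.isCoprime_iff_gcd_eq_one.mp h)

lemma adj_some_div {u : Option ℚ} {a b : ℤ} (hb : 0 < b) (h : |num u * b - a * den u| = 1) :
    fareyGraph.Adj u (some (a / b : ℚ)) := by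
  have hab := Int.isCoprime_of_abs_sub_mul_eq_one h
  rwa [adj_iff_abs_det_eq_one, det, num_some_div hb hab, den_some_div hb hab]

lemma neighborSet_infinite : ∀ u, (fareyGraph.neighborSet u).Infinite
  | none => Set.infinite_of_injective_forall_mem (f := fun n : ℕ => some (n : ℚ))
      (fun m n h => by simpa using h) fun n => Rat.den_natCast n
  | some x => by
    obtain ⟨a, b, hab⟩ := isCoprime_num_den (some x)
    refine Set.Infinite.of_image den (Set.infinite_of_not_bddAbove ?_)
    rintro ⟨N, hN⟩
    set p := num (some x)
    set q := den (some x)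
    -- by Bézout, `(n p - b) / (a + n q)` is a neighbour of `p / q` for every `n`
    obtain ⟨n, hn⟩ : ∃ n : ℤ, n = |N| + |a| + 1 := ⟨_, rfl⟩
    have hq : 1 ≤ q := by have := x.pos; simp only [q, den]; omega
    have hnq : n ≤ n * q := le_mul_of_one_le_right (by rw [hn]; positivity) hq
    have hdet : |p * (a + n * q) - (n * p - b) * q| = 1 := by
      rw [show p * (a + n * q) - (n * p - b) * q = 1 by linear_combination hab, abs_one]
    have hpos : 0 < a + n * q := by linarith [neg_abs_le a, abs_nonneg N]
    have hgt : N < a + n * q := by linarith [neg_abs_le a, le_abs_self N]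
    exact hgt.not_ge (hN ⟨_, adj_some_div hpos hdet,
      den_some_div hpos (Int.isCoprime_of_abs_sub_mul_eq_one hdet)⟩)

lemma commonNeighbors_nonempty {u v : Option ℚ} (huv : fareyGraph.Adj u v) :
    (fareyGraph.commonNeighbors u v).Nonempty := by
  have h := (adj_iff_abs_det_eq_one u v).mp huv
  have hb : 0 < den u + den v := by
    by_contra hle
    have hu : den u = 0 := by linarith [den_nonneg u, den_nonneg v]
    have hv : den v = 0 := by linarith [den_nonneg u, den_nonneg v]
    simp [det, hu, hv] at h
  -- the mediant of `u` and `v`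
  refine ⟨some (((num u + num v : ℤ) : ℚ) / (den u + den v : ℤ)),
    adj_some_div hb ?_, adj_some_div hb ?_⟩
  · rwa [show num u * (den u + den v) - (num u + num v) * den u = det u v by unfold det; ring]
  · rwa [show num v * (den u + den v) - (num u + num v) * den v = -det u v by unfold det; ring,
      abs_neg]

lemma commonNeighbors_finite {u v : Option ℚ} (huv : fareyGraph.Adj u v) :
    (fareyGraph.commonNeighbors u v).Finite := by
  have hdet := (adj_iff_abs_det_eq_one u v).mp huv
  have hD : det u v ≠ 0 := by rintro h; simp [h] at hdet
  -- Cramer's rule: `z` is determined by `det z v` and `det u z`, both of which are `±1`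
  refine Set.Finite.of_injOn (f := fun z => (det z v, det u z)) (t := {1, -1} ×ˢ {1, -1})
    (fun z hz => ?_) (fun z _ z' _ h => ?_) (Set.toFinite _)
  · rw [SimpleGraph.mem_commonNeighbors] at hz
    exact ⟨(abs_eq zero_le_one).mp ((adj_iff_abs_det_eq_one z v).mp hz.2.symm),
      (abs_eq zero_le_one).mp ((adj_iff_abs_det_eq_one u z).mp hz.1)⟩
  · simp only [Prod.mk.injEq] at h
    refine num_den_injective (Prod.ext (mul_left_cancel₀ hD ?_) (mul_left_cancel₀ hD ?_))
    · rw [det_mul_num u v z, det_mul_num u v z', h.1, h.2]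
    · rw [det_mul_den u v z, det_mul_den u v z', h.1, h.2]

lemma exists_triangle_mem_of_adj {u v : Option ℚ} (huv : fareyGraph.Adj u v) :
    ∃ T : FareyTriangle, u ∈ T.1 ∧ v ∈ T.1 := by
  obtain ⟨w, huw, hvw⟩ := commonNeighbors_nonempty huv
  exact ⟨⟨{u, v, w}, SimpleGraph.is3Clique_triple_iff.mpr ⟨huv, huw, hvw⟩⟩,
    by simp, by simp⟩

lemma setOf_mem_triangle_infinite (u : Option ℚ) : {T : FareyTriangle | u ∈ T.1}.Infinite := by
  intro hfin
  refine neighborSet_infinite u ((hfin.biUnion fun T _ => T.1.finite_toSet).subset fun v huv => ?_)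
  obtain ⟨T, huT, hvT⟩ := exists_triangle_mem_of_adj huv
  exact Set.mem_biUnion huT hvT

lemma setOf_card_inter_eq_two_finite (T : FareyTriangle) :
    {T' : FareyTriangle | (T.1 ∩ T'.1).card = 2}.Finite :=
  ((SimpleGraph.setOf_isClique_card_inter_eq_two_finite (fun _ _ => commonNeighbors_finite)
    T.1).preimage Subtype.val_injective.injOn).subset fun T' h => ⟨T'.2.isClique, h⟩

end Farey

namespace ModelGraph

open Farey

lemma neighborSet_inl_infinite (x : Option ℚ) :
    (modelGraph.neighborSet (.inl x)).Infinite :=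
  ((neighborSet_infinite x).image Sum.inl_injective.injOn).mono <| by
    rintro _ ⟨y, hy, rfl⟩
    exact hy

lemma neighborSet_inr_inl_infinite (x : Option ℚ) :
    (modelGraph.neighborSet (.inr (.inl x))).Infinite :=
  ((setOf_mem_triangle_infinite x).image (Sum.inr_injective.comp Sum.inr_injective).injOn).mono
    (by rintro _ ⟨T, hT, rfl⟩; exact hT)

lemma neighborSet_inr_inr_finite (T : FareyTriangle) :
    (modelGraph.neighborSet (.inr (.inr T))).Finite := by
  refine ((T.1.finite_toSet.image (Sum.inr ∘ Sum.inl)).union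
    ((setOf_card_inter_eq_two_finite T).image (Sum.inr ∘ Sum.inr))).subset ?_
  rintro (x | x | T') hv
  · exact hv.elim
  · exact Or.inl ⟨x, hv, rfl⟩
  · exact Or.inr ⟨T', hv.2, rfl⟩

lemma neighborSet_finite_iff (v : ModelVertex) :
    (modelGraph.neighborSet v).Finite ↔ ∃ T, v = .inr (.inr T) := by
  refine ⟨fun h => ?_, fun ⟨T, hT⟩ => hT ▸ neighborSet_inr_inr_finite T⟩
  rcases v with x | x | T
  · exact (neighborSet_inl_infinite x h).elim
  · exact (neighborSet_inr_inl_infinite x h).elim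
  · exact ⟨T, rfl⟩

lemma isLeft_iff (v : ModelVertex) : v.isLeft ↔
    ¬(modelGraph.neighborSet v).Finite ∧
      ∀ w, modelGraph.Adj v w → ¬(modelGraph.neighborSet w).Finite := by
  simp only [neighborSet_finite_iff]
  rcases v with x | x | T
  · simp only [Sum.isLeft_inl, true_iff]
    exact ⟨by simp, fun _ hw ⟨_, hT⟩ => by subst hT; exact hw⟩
  · obtain ⟨T, hT⟩ := (setOf_mem_triangle_infinite x).nonempty
    simp only [Sum.isLeft_inr, Bool.false_eq_true, false_iff, not_and, not_forall, not_not]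
    exact fun _ => ⟨.inr (.inr T), hT, T, rfl⟩
  · simp

lemma isLeft_apply (A : modelGraph ≃g modelGraph) (v : ModelVertex) :
    (A v).isLeft = v.isLeft := by
  rw [Bool.eq_iff_iff, isLeft_iff, isLeft_iff, A.neighborSet_finite_iff, A.surjective.forall]
  simp only [A.map_adj_iff, A.neighborSet_finite_iff]

def restrict (A : modelGraph ≃g modelGraph) : fareyGraph ≃g fareyGraph where
  toFun x := (A (.inl x)).getLeft (by rw [isLeft_apply, Sum.isLeft_inl])
  invFun x := (A.symm (.inl x)).getLeft (by rw [isLeft_apply, Sum.isLeft_inl])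
  left_inv x := by simp
  right_inv x := by simp
  map_rel_iff' {x y} := by
    change modelGraph.Adj (.inl ((A (.inl x)).getLeft _)) (.inl ((A (.inl y)).getLeft _)) ↔ _
    rw [Sum.inl_getLeft, Sum.inl_getLeft, A.map_adj_iff]
    exact Iff.rfl

lemma apply_inl (A : modelGraph ≃g modelGraph) (x : Option ℚ) :
    A (.inl x) = .inl (restrict A x) :=
  (Sum.inl_getLeft (A (.inl x)) _).symm

lemma eq_restrict {A : modelGraph ≃g modelGraph} {a : fareyGraph ≃g fareyGraph}
    (h : ∀ x, A (.inl x) = .inl (a x)) : a = restrict A :=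
  RelIso.ext fun x => Sum.inl_injective ((h x).symm.trans (apply_inl A x))

lemma restrict_trans (A B : modelGraph ≃g modelGraph) :
    restrict (A.trans B) = (restrict A).trans (restrict B) :=
  (eq_restrict fun x => by
    rw [RelIso.trans_apply, RelIso.trans_apply, apply_inl A, apply_inl B]).symm

def triangleEquiv (a : fareyGraph ≃g fareyGraph) : FareyTriangle ≃ FareyTriangle :=
  a.toEquiv.finsetCongr.subtypeEquiv fun _ => a.isNClique_map_iff.symm

lemma mem_triangleEquiv (a : fareyGraph ≃g fareyGraph) (T : FareyTriangle) (x : Option ℚ) :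
    a x ∈ (triangleEquiv a T).1 ↔ x ∈ T.1 :=
  Finset.mem_map' a.toEquiv.toEmbedding

def extend (a : fareyGraph ≃g fareyGraph) : modelGraph ≃g modelGraph where
  toEquiv := a.toEquiv.sumCongr (a.toEquiv.sumCongr (triangleEquiv a))
  map_rel_iff' := by
    rintro (x | x | T) (y | y | T')
    case inr.inr.inr.inr =>
      change (_ ≠ _ ∧ (T.1.map _ ∩ T'.1.map _).card = 2) ↔ _
      rw [← Finset.map_inter, Finset.card_map, (triangleEquiv a).injective.ne_iff]
      exact Iff.rfl
    all_goals first
      | exact Iff.rfl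
      | exact a.map_adj_iff
      | exact a.injective.eq_iff
      | exact mem_triangleEquiv a _ _

lemma apply_inr_inl (A : modelGraph ≃g modelGraph) (x : Option ℚ) :
    A (.inr (.inl x)) = .inr (.inl (restrict A x)) := by
  have hadj : modelGraph.Adj (.inl (restrict A x)) (A (.inr (.inl x))) :=
    apply_inl A x ▸ A.map_adj_iff.mpr rfl
  have hright := isLeft_apply A (.inr (.inl x))
  rcases h : A (.inr (.inl x)) with y | y | T
  · simp [h] at hright
  · rw [h] at hadj
    rw [show y = restrict A x from hadj.symm]
  · rw [h] at hadj
    exact hadj.elim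

lemma apply_inr_inr (A : modelGraph ≃g modelGraph) (T : FareyTriangle) :
    A (.inr (.inr T)) = .inr (.inr (triangleEquiv (restrict A) T)) := by
  obtain ⟨T', hT'⟩ := (neighborSet_finite_iff _).mp
    ((A.neighborSet_finite_iff _).mpr (neighborSet_inr_inr_finite T))
  rw [hT']
  -- `A` maps the dual vertices `x̃`, `x ∈ T`, to neighbours of `A T`; compare cardinalities
  refine congrArg (Sum.inr ∘ Sum.inr) (Subtype.ext (Finset.eq_of_subset_of_card_le ?_ ?_)).symm
  · intro y hy
    obtain ⟨x, hx, rfl⟩ := Finset.mem_map.mp hy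
    have hadj := A.map_adj_iff.mpr (show modelGraph.Adj (.inr (.inl x)) (.inr (.inr T)) from hx)
    rwa [apply_inr_inl, hT'] at hadj
  · rw [T'.2.card_eq, (triangleEquiv (restrict A) T).2.card_eq]

lemma extend_restrict (A : modelGraph ≃g modelGraph) : extend (restrict A) = A := by
  ext (x | x | T)
  · exact (apply_inl A x).symm
  · exact (apply_inr_inl A x).symm
  · exact (apply_inr_inr A T).symm

lemma restrict_extend (a : fareyGraph ≃g fareyGraph) : restrict (extend a) = a :=
  (eq_restrict fun _ => rfl).symm

end ModelGraph

/-- For every graph automorphism `A` of the model graph `G` there is a unique graph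
automorphism `a` of the Farey graph `𝔽` with `A (.inl x) = .inl (a x)` for all `x`,
and the resulting restriction map `Aut(G) → Aut(𝔽)` is a group isomorphism, i.e. a
bijection respecting composition. -/
theorem modelGraph_aut_restriction_iso :
    (∀ A : modelGraph ≃g modelGraph, ∃! a : fareyGraph ≃g fareyGraph,
      ∀ x : Option ℚ, A (.inl x) = .inl (a x)) ∧
    ∃ Φ : (modelGraph ≃g modelGraph) ≃ (fareyGraph ≃g fareyGraph),
      (∀ (A : modelGraph ≃g modelGraph) (x : Option ℚ),
        A (.inl x) = .inl (Φ A x)) ∧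
      ∀ A B : modelGraph ≃g modelGraph, Φ (A.trans B) = (Φ A).trans (Φ B) :=
  ⟨fun A => ⟨ModelGraph.restrict A, ModelGraph.apply_inl A, fun _ => ModelGraph.eq_restrict⟩,
    ⟨ModelGraph.restrict, ModelGraph.extend, ModelGraph.extend_restrict,
      ModelGraph.restrict_extend⟩,
    ModelGraph.apply_inl, ModelGraph.restrict_trans⟩
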